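/- arXiv:1207.3877 — 5 statements merged into one kernel-verified Lean document; each statement's English description precedes it below -/
import Mathlib

section
/- Let a, b, c ∈ ℝ_+^N be vectors of non-negative reals each arranged in descending order. If a is multiplicatively majorized by b (i.e., ∏_{k=1}^K a_k ≤ ∏_{k=1}^K b_k for all 1 ≤ K < N and ∏_{k=1}^N a_k = ∏_{k=1}^N b_k), then ∏_{k=1}^N (a_k + c_{N+1-k}) ≤ ∏_{k=1}^N (b_k + c_{N+1-k}). -/
/-!
With `d = c ∘ rev` increasing and `t i = log b i - log a i`, the hypothesis says that every
partial sum of `t` is nonnegative. Concavity of `log` gives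
`log (b i + d i) - log (a i + d i) ≥ w i * t i` with weights `w i = a i / (a i + d i)`, which
decrease because `a` decreases and `d` increases; Abel summation then gives `∑ w i * t i ≥ 0`.
The indices where `a` vanishes form a final segment and are compared factor by factor.
-/

open Finset

lemma Real.mul_log_le_log_mul_add_one_sub {p x : ℝ} (hp0 : 0 ≤ p) (hp1 : p ≤ 1) (hx : 0 < x) :
    p * Real.log x ≤ Real.log (p * x + (1 - p)) := by
  simpa using strictConcaveOn_log_Ioi.concaveOn.2 (Set.mem_Ioi.2 hx) (Set.mem_Ioi.2 one_pos)
    hp0 (sub_nonneg.2 hp1) (add_sub_cancel p 1)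

lemma Real.div_add_mul_log_sub_log_le {A B d : ℝ} (hA : 0 < A) (hB : 0 < B) (hd : 0 ≤ d) :
    A / (A + d) * (Real.log B - Real.log A) ≤ Real.log (B + d) - Real.log (A + d) := by
  have hAd : 0 < A + d := by linarith
  have hsplit : (B + d) / (A + d) = A / (A + d) * (B / A) + (1 - A / (A + d)) := by
    field_simp; ring
  rw [← Real.log_div hB.ne' hA.ne', ← Real.log_div (by linarith) hAd.ne', hsplit]
  exact Real.mul_log_le_log_mul_add_one_sub (div_nonneg hA.le hAd.le)
    ((div_le_one hAd).2 (by linarith)) (div_pos hB hA)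

section LinearOrder

variable {ι : Type*} [LinearOrder ι]

theorem Finset.mul_sum_le_sum_mul_of_antitoneOn {α t : ι → ℝ} {c : ℝ} (s : Finset ι)
    (hα : AntitoneOn α s) (hc : ∀ i ∈ s, c ≤ α i)
    (ht : ∀ i ∈ s, 0 ≤ ∑ j ∈ s with j ≤ i, t j) :
    c * ∑ i ∈ s, t i ≤ ∑ i ∈ s, α i * t i := by
  classical
  induction s using Finset.induction_on_max generalizing c with
  | empty => simp
  | insert m s hlt ih =>
    have hm : m ∉ s := fun h => lt_irrefl m (hlt m h)
    have hs : α m * ∑ i ∈ s, t i ≤ ∑ i ∈ s, α i * t i := by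
      refine ih (hα.mono (by simp)) (fun i hi => hα (by simp [hi]) (by simp) (hlt i hi).le)
        fun i hi => ?_
      have := ht i (mem_insert_of_mem hi)
      rwa [filter_insert, if_neg (not_le.2 (hlt i hi))] at this
    have htotal : 0 ≤ t m + ∑ i ∈ s, t i := by
      have := ht m (mem_insert_self m s)
      rwa [filter_true_of_mem fun j hj => (mem_insert.1 hj).elim le_of_eq
        fun hj => (hlt j hj).le, sum_insert hm] at this
    rw [sum_insert hm, sum_insert hm]
    nlinarith [hc m (mem_insert_self m s)]

theorem Finset.prod_add_le_prod_add_of_pos {a b d : ι → ℝ} (s : Finset ι)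
    (ha : ∀ i ∈ s, 0 < a i) (hb : ∀ i ∈ s, 0 ≤ b i) (hd : ∀ i ∈ s, 0 ≤ d i)
    (ha_anti : AntitoneOn a s) (hd_mono : MonotoneOn d s)
    (hmaj : ∀ i ∈ s, ∏ j ∈ s with j ≤ i, a j ≤ ∏ j ∈ s with j ≤ i, b j) :
    ∏ i ∈ s, (a i + d i) ≤ ∏ i ∈ s, (b i + d i) := by
  have hprefix_pos : ∀ i ∈ s, 0 < ∏ j ∈ s with j ≤ i, a j := fun i _ =>
    prod_pos fun j hj => ha j (mem_filter.1 hj).1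
  have hb_pos : ∀ i ∈ s, 0 < b i := by
    refine fun i hi => (hb i hi).lt_of_ne fun hbi => ?_
    have hzero : ∏ j ∈ s with j ≤ i, b j = 0 := prod_eq_zero (by simp [hi]) hbi.symm
    linarith [hmaj i hi, hprefix_pos i hi]
  have had_pos : ∀ i ∈ s, 0 < a i + d i := fun i hi => by linarith [ha i hi, hd i hi]
  have hbd_pos : ∀ i ∈ s, 0 < b i + d i := fun i hi => by linarith [hb_pos i hi, hd i hi]
  have hweight_anti : AntitoneOn (fun i => a i / (a i + d i)) s := by
    intro i hi j hj hij
    rw [div_le_div_iff₀ (had_pos j hj) (had_pos i hi)]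
    nlinarith [ha_anti hi hj hij, hd_mono hi hj hij, ha j hj, hd i hi]
  have hlog_prefix : ∀ i ∈ s, 0 ≤ ∑ j ∈ s with j ≤ i, (Real.log (b j) - Real.log (a j)) := by
    intro i hi
    have := Real.log_le_log (hprefix_pos i hi) (hmaj i hi)
    rw [Real.log_prod fun j hj => (ha j (mem_filter.1 hj).1).ne',
      Real.log_prod fun j hj => (hb_pos j (mem_filter.1 hj).1).ne'] at this
    rw [sum_sub_distrib]
    linarith
  have habel := s.mul_sum_le_sum_mul_of_antitoneOn hweight_anti
    (fun i hi => div_nonneg (ha i hi).le (had_pos i hi).le) hlog_prefix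
  rw [zero_mul] at habel
  rw [← Real.log_le_log_iff (prod_pos had_pos) (prod_pos hbd_pos),
    Real.log_prod fun i hi => (had_pos i hi).ne', Real.log_prod fun i hi => (hbd_pos i hi).ne',
    ← sub_nonneg, ← sum_sub_distrib]
  exact habel.trans <| sum_le_sum fun i hi =>
    Real.div_add_mul_log_sub_log_le (ha i hi) (hb_pos i hi) (hd i hi)

theorem Finset.prod_add_le_prod_add {a b d : ι → ℝ} (s : Finset ι)
    (ha : ∀ i ∈ s, 0 ≤ a i) (hb : ∀ i ∈ s, 0 ≤ b i) (hd : ∀ i ∈ s, 0 ≤ d i)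
    (ha_anti : AntitoneOn a s) (hd_mono : MonotoneOn d s)
    (hmaj : ∀ i ∈ s, ∏ j ∈ s with j ≤ i, a j ≤ ∏ j ∈ s with j ≤ i, b j) :
    ∏ i ∈ s, (a i + d i) ≤ ∏ i ∈ s, (b i + d i) := by
  set p := {i ∈ s | 0 < a i}
  have hp : (p : Set ι) ⊆ s := coe_subset.2 (filter_subset _ _)
  have hprefix : ∀ i ∈ p, {j ∈ p | j ≤ i} = {j ∈ s | j ≤ i} := by
    intro i hi
    obtain ⟨his, hai⟩ := mem_filter.1 hi
    rw [filter_filter]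
    refine filter_congr fun j hj => ⟨And.right, fun hji => ⟨?_, hji⟩⟩
    exact hai.trans_le (ha_anti hj his hji)
  have hpos : ∏ i ∈ p, (a i + d i) ≤ ∏ i ∈ p, (b i + d i) := by
    refine p.prod_add_le_prod_add_of_pos (fun i hi => (mem_filter.1 hi).2)
      (fun i hi => hb i (hp hi)) (fun i hi => hd i (hp hi)) (ha_anti.mono hp) (hd_mono.mono hp)
      fun i hi => ?_
    rw [hprefix i hi]
    exact hmaj i (hp hi)
  have hzero : ∏ i ∈ s with ¬0 < a i, (a i + d i) ≤ ∏ i ∈ s with ¬0 < a i, (b i + d i) := by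
    refine prod_le_prod (fun i hi => ?_) fun i hi => ?_ <;> rw [mem_filter] at hi
    · linarith [ha i hi.1, hd i hi.1]
    · linarith [hb i hi.1]
  rw [← prod_filter_mul_prod_filter_not s (fun i => 0 < a i)]
  rw [← prod_filter_mul_prod_filter_not s (fun i => 0 < a i) (fun i => b i + d i)]
  exact mul_le_mul hpos hzero (prod_nonneg fun i hi => by
    linarith [ha i (mem_filter.1 hi).1, hd i (mem_filter.1 hi).1])
    (prod_nonneg fun i hi => by linarith [hb i (hp hi), hd i (hp hi)])

end LinearOrder

theorem stmt_3_general {N : ℕ} (a b c : Fin N → ℝ)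
    (ha0 : ∀ i, 0 ≤ a i) (hb0 : ∀ i, 0 ≤ b i) (hc0 : ∀ i, 0 ≤ c i)
    (ha_desc : Antitone a) (hc_desc : Antitone c)
    (hmaj : ∀ K < N, ∏ i ∈ Finset.univ.filter (fun i : Fin N => (i : ℕ) < K), a i ≤
      ∏ i ∈ Finset.univ.filter (fun i : Fin N => (i : ℕ) < K), b i)
    (heq : ∏ i : Fin N, a i = ∏ i : Fin N, b i) :
    ∏ k : Fin N, (a k + c k.rev) ≤ ∏ k : Fin N, (b k + c k.rev) := by
  have hprefix : ∀ i : Fin N,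
      univ.filter (fun j => j ≤ i) = univ.filter fun j : Fin N => (j : ℕ) < i + 1 := by
    intro i; ext j; simp only [mem_filter, mem_univ, true_and, Fin.le_def, Nat.lt_succ_iff]
  refine univ.prod_add_le_prod_add (fun i _ => ha0 i) (fun i _ => hb0 i) (fun i _ => hc0 _)
    (ha_desc.antitoneOn _) ((hc_desc.comp Fin.rev_anti).monotoneOn _) fun i _ => ?_
  rw [hprefix]
  rcases (Nat.add_one_le_of_lt i.isLt).lt_or_eq with hlt | hlast
  · exact hmaj _ hlt
  · rw [hlast]
    simpa only [Fin.is_lt, filter_true] using heq.le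

theorem stmt_3 {N : ℕ} (a b c : Fin N → ℝ)
    (ha0 : ∀ i, 0 ≤ a i) (hb0 : ∀ i, 0 ≤ b i) (hc0 : ∀ i, 0 ≤ c i)
    (ha_desc : Antitone a) (hb_desc : Antitone b) (hc_desc : Antitone c)
    (hmaj : ∀ K < N, ∏ i ∈ Finset.univ.filter (fun i : Fin N => (i : ℕ) < K), a i ≤
      ∏ i ∈ Finset.univ.filter (fun i : Fin N => (i : ℕ) < K), b i)
    (heq : ∏ i : Fin N, a i = ∏ i : Fin N, b i) :
    ∏ k : Fin N, (a k + c k.rev) ≤ ∏ k : Fin N, (b k + c k.rev) :=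
  stmt_3_general a b c ha0 hb0 hc0 ha_desc hc_desc hmaj heq
end

section
/- Let A be an N×N positive semi-definite Hermitian matrix and D an N×N diagonal matrix with non-negative diagonal entries d_1 ≥ ... ≥ d_N. Let Γ = Dᴴ A D with eigenvalues λ_k(Γ) in descending order. Then for each K with 1 ≤ K ≤ N-1, ∏_{k=1}^K λ_k(Γ) ≤ ∏_{k=1}^K d_k² λ_k(A), and ∏_{k=1}^N λ_k(Γ) = ∏_{k=1}^N d_k² λ_k(A). -/
/-!
Let `U` be an `N × K` isometry whose columns are eigenvectors of `Γ` for `K` of its eigenvalues,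
so that their product is `det (Uᴴ Γ U) = det ((D U)ᴴ A (D U))`. For a positive semi-definite
`M = P diag(μ) Pᴴ` with `μ` sorted, the Cauchy–Binet formula writes `det (Xᴴ M X)` as
`∑_S (∏_{i ∈ S} μ_i) |det (Pᴴ X)_S|²` over `K`-subsets `S`, hence it is at most
`(μ_1 ⋯ μ_K) det (Xᴴ X)`. Applying this to `A` with `X = D U`, and then to `D²` with `X = U`,
gives the inequality. For `K = N` it is the identity `det Γ = (det D)² det A`.
-/

open Matrix ComplexOrder Finset

section CauchyBinet

variable {n : Type*} [LinearOrder n] {K : ℕ}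

theorem Tuple.sort_strictMono_comp {f : Fin K → n} (hf : StrictMono f)
    (σ : Equiv.Perm (Fin K)) : Tuple.sort (f ∘ σ) = σ⁻¹ := by
  refine (Tuple.eq_sort_iff.mpr ⟨?_, fun i j hij heq => ?_⟩).symm
  · simpa [Function.comp_def] using hf.monotone
  · simp only [Equiv.Perm.coe_inv, Function.comp_apply, Equiv.apply_symm_apply] at heq
    exact absurd (hf.injective heq) hij.ne

theorem sum_injective_eq_sum_strictMono_sum_perm [Fintype n] {M : Type*} [AddCommMonoid M]
    (F : (Fin K → n) → M) :
    ∑ p with Function.Injective p, F p =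
      ∑ f with StrictMono f, ∑ σ : Equiv.Perm (Fin K), F (f ∘ σ) := by
  rw [← sum_product']
  refine sum_nbij' (fun p => (p ∘ Tuple.sort p, (Tuple.sort p)⁻¹)) (fun q => q.1 ∘ q.2)
    ?_ ?_ ?_ ?_ ?_
  · intro p hp
    simp only [mem_product, mem_filter, mem_univ, true_and, and_true] at hp ⊢
    exact (Tuple.monotone_sort p).strictMono_of_injective (hp.comp (Tuple.sort p).injective)
  · intro q hq
    simp only [mem_product, mem_filter, mem_univ, true_and, and_true] at hq ⊢
    exact hq.injective.comp q.2.injective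
  · intro p _
    ext; simp
  · rintro ⟨f, σ⟩ hq
    simp only [mem_product, mem_filter, mem_univ, true_and, and_true] at hq
    rw [Tuple.sort_strictMono_comp hq, inv_inv]
    ext <;> simp
  · intro p _
    simp [Function.comp_def]

theorem Matrix.det_mul_eq_sum_det_submatrix [Fintype n] {R : Type*} [CommRing R]
    (X : Matrix (Fin K) n R) (Y : Matrix n (Fin K) R) :
    (X * Y).det = ∑ f with StrictMono f, (X.submatrix id f).det * (Y.submatrix f id).det := by
  have expand : (X * Y).det = ∑ p : Fin K → n, (X.submatrix id p).det * ∏ i, Y (p i) i := by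
    simp only [det_apply', mul_apply, prod_univ_sum, mul_sum, Fintype.piFinset_univ, sum_mul,
      prod_mul_distrib, submatrix_apply, id_eq]
    rw [sum_comm]
    refine sum_congr rfl fun p _ => sum_congr rfl fun σ _ => by ring
  have noninjective : ∀ p : Fin K → n, ¬ Function.Injective p →
      (X.submatrix id p).det = 0 := by
    intro p hp
    obtain ⟨i, j, hpij, hij⟩ := Function.not_injective_iff.mp hp
    exact det_zero_of_column_eq hij fun k => by simp [hpij]
  rw [expand, ← sum_filter_of_ne (p := Function.Injective) fun p _ h =>
    of_not_not fun hp => h (by rw [noninjective p hp, zero_mul]),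
    sum_injective_eq_sum_strictMono_sum_perm]
  refine sum_congr rfl fun f _ => ?_
  simp only [det_apply' (Y.submatrix f id), mul_sum]
  refine sum_congr rfl fun σ _ => ?_
  rw [show X.submatrix id (f ∘ σ) = (X.submatrix id f).submatrix id σ from rfl, det_permute']
  simp only [submatrix_apply, id_eq, Function.comp_apply]
  ring

theorem Matrix.det_conjTranspose_mul_diagonal_mul [Fintype n] {R : Type*} [CommRing R]
    [StarRing R] (μ : n → R) (C : Matrix n (Fin K) R) :
    (Cᴴ * diagonal μ * C).det =
      ∑ f with StrictMono f,
        (∏ j, μ (f j)) * (star (C.submatrix f id).det * (C.submatrix f id).det) := by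
  rw [det_mul_eq_sum_det_submatrix]
  refine sum_congr rfl fun f _ => ?_
  have hsub : (Cᴴ * diagonal μ).submatrix id f =
      (C.submatrix f id)ᴴ * diagonal (μ ∘ f) := by
    ext; simp [mul_diagonal]
  rw [hsub, det_mul, det_conjTranspose, det_diagonal, Function.comp_def]
  ring

theorem Matrix.det_conjTranspose_mul_diagonal_mul_le [Fintype n] {𝕜 : Type*} [RCLike 𝕜]
    {μ : n → ℝ} {c : ℝ} (hμ : ∀ f : Fin K → n, StrictMono f → ∏ j, μ (f j) ≤ c)
    (C : Matrix n (Fin K) 𝕜) :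
    (Cᴴ * diagonal (fun i => (μ i : 𝕜)) * C).det ≤ c * (Cᴴ * C).det := by
  have hone : Cᴴ * C = Cᴴ * (diagonal fun _ => (1 : 𝕜) : Matrix n n 𝕜) * C := by
    rw [diagonal_one, Matrix.mul_one]
  rw [hone, det_conjTranspose_mul_diagonal_mul, det_conjTranspose_mul_diagonal_mul, mul_sum]
  refine sum_le_sum fun f hf => ?_
  rw [prod_const_one, one_mul, ← RCLike.ofReal_prod]
  exact mul_le_mul_of_nonneg_right (RCLike.ofReal_le_ofReal.mpr (hμ f (mem_filter.mp hf).2))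
    (star_mul_self_nonneg _)

end CauchyBinet

theorem Fin.val_le_val_of_strictMono {K N : ℕ} {f : Fin K → Fin N} (hf : StrictMono f)
    (j : Fin K) : (j : ℕ) ≤ f j := by
  have := card_le_card_of_injOn f (s := Iic j) (t := Iic (f j))
    (fun a ha => by simpa using hf.monotone (by simpa using ha)) hf.injective.injOn
  simpa using this

theorem Antitone.prod_comp_le_prod_castLE {R : Type*} [CommSemiring R] [PartialOrder R]
    [IsOrderedRing R] {K N : ℕ} {lam : Fin N → R} (hlam : Antitone lam)
    (h0 : ∀ i, 0 ≤ lam i) (hKN : K ≤ N) {h : Fin K → Fin N} (hh : Function.Injective h) :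
    ∏ j, lam (h j) ≤ ∏ j, lam (Fin.castLE hKN j) := by
  have hsorted : StrictMono (h ∘ Tuple.sort h) :=
    (Tuple.monotone_sort h).strictMono_of_injective (hh.comp (Tuple.sort h).injective)
  rw [← Equiv.prod_comp (Tuple.sort h) fun j => lam (h j)]
  exact prod_le_prod (fun j _ => h0 _) fun j _ =>
    hlam (Fin.le_def.mpr (by simpa using Fin.val_le_val_of_strictMono hsorted j))

theorem Fin.prod_filter_val_lt {M : Type*} [CommMonoid M] {K N : ℕ} (hKN : K ≤ N)
    (f : Fin N → M) :
    ∏ i ∈ univ.filter (fun i : Fin N => (i : ℕ) < K), f i =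
      ∏ j : Fin K, f (Fin.castLE hKN j) := by
  have hfilter : univ.filter (fun i : Fin N => (i : ℕ) < K) = univ.map (Fin.castLEEmb hKN) := by
    ext i
    simpa using ⟨fun hi => ⟨⟨i, hi⟩, rfl⟩, by rintro ⟨j, rfl⟩; exact j.isLt⟩
  rw [hfilter, prod_map]
  rfl

theorem Matrix.conjTranspose_submatrix_mul_mul_submatrix {m l R : Type*} [Fintype m]
    [CommSemiring R] [StarRing R] (P : Matrix m m R) (M : Matrix m m R) (e : l → m) :
    (P.submatrix id e)ᴴ * M * P.submatrix id e = (Pᴴ * M * P).submatrix e e := by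
  rw [conjTranspose_submatrix, submatrix_mul _ _ _ id _ Function.bijective_id,
    submatrix_mul _ _ _ id _ Function.bijective_id, submatrix_id_id]

section Hermitian

variable {𝕜 : Type*} [RCLike 𝕜] {N : ℕ}

theorem Matrix.IsHermitian.conjTranspose_eigenvectorUnitary_mul_mul_eigenvectorUnitary
    {M : Matrix (Fin N) (Fin N) 𝕜} (hM : M.IsHermitian) :
    (hM.eigenvectorUnitary : Matrix (Fin N) (Fin N) 𝕜)ᴴ * M * hM.eigenvectorUnitary =
      diagonal (fun i => (hM.eigenvalues i : 𝕜)) := by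
  simpa [Unitary.conjStarAlgAut_star_apply, Function.comp_def, star_eq_conjTranspose] using
    hM.conjStarAlgAut_star_eigenvectorUnitary

theorem Matrix.IsHermitian.exists_conjTranspose_mul_self_eq_one_and_conj_eq_diagonal
    {M : Matrix (Fin N) (Fin N) 𝕜} (hM : M.IsHermitian) {K : ℕ} {e : Fin K → Fin N}
    (he : Function.Injective e) :
    ∃ U : Matrix (Fin N) (Fin K) 𝕜, Uᴴ * U = 1 ∧
      Uᴴ * M * U = diagonal (fun j => (hM.eigenvalues (e j) : 𝕜)) := by
  set P : Matrix (Fin N) (Fin N) 𝕜 := (hM.eigenvectorUnitary : Matrix (Fin N) (Fin N) 𝕜)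
  have hPP : Pᴴ * P = 1 := Unitary.coe_star_mul_self hM.eigenvectorUnitary
  refine ⟨P.submatrix id e, ?_, ?_⟩
  · simpa [hPP, submatrix_one _ he] using conjTranspose_submatrix_mul_mul_submatrix P 1 e
  · rw [conjTranspose_submatrix_mul_mul_submatrix,
      hM.conjTranspose_eigenvectorUnitary_mul_mul_eigenvectorUnitary, submatrix_diagonal _ _ he]
    rfl

theorem Matrix.PosSemidef.det_conjTranspose_mul_mul_le {A : Matrix (Fin N) (Fin N) 𝕜}
    (hA : A.PosSemidef) {lam : Fin N → ℝ} {s : Equiv.Perm (Fin N)}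
    (hlam : ∀ i, lam i = hA.1.eigenvalues (s i)) (hlam_anti : Antitone lam) {K : ℕ}
    (hKN : K ≤ N) (X : Matrix (Fin N) (Fin K) 𝕜) :
    (Xᴴ * A * X).det ≤ (∏ j, lam (Fin.castLE hKN j)) * (Xᴴ * X).det := by
  set P : Matrix (Fin N) (Fin N) 𝕜 := (hA.1.eigenvectorUnitary : Matrix (Fin N) (Fin N) 𝕜)
  have hPP : P * Pᴴ = 1 := Unitary.coe_mul_star_self hA.1.eigenvectorUnitary
  have hXAX : Xᴴ * A * X = (Pᴴ * X)ᴴ * (Pᴴ * A * P) * (Pᴴ * X) := by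
    simp only [conjTranspose_mul, conjTranspose_conjTranspose, Matrix.mul_assoc]
    rw [← Matrix.mul_assoc P Pᴴ, hPP, Matrix.one_mul, ← Matrix.mul_assoc P Pᴴ, hPP,
      Matrix.one_mul]
  have hXX : Xᴴ * X = (Pᴴ * X)ᴴ * (Pᴴ * X) := by
    rw [conjTranspose_mul, conjTranspose_conjTranspose, Matrix.mul_assoc,
      ← Matrix.mul_assoc P Pᴴ, hPP, Matrix.one_mul]
  rw [hXAX, hA.1.conjTranspose_eigenvectorUnitary_mul_mul_eigenvectorUnitary, hXX]
  refine det_conjTranspose_mul_diagonal_mul_le (fun f hf => ?_) _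
  calc ∏ j, hA.1.eigenvalues (f j) = ∏ j, lam (s.symm (f j)) := by simp [hlam]
    _ ≤ _ := hlam_anti.prod_comp_le_prod_castLE (fun i => hlam i ▸ hA.eigenvalues_nonneg _) hKN
        (s.symm.injective.comp hf.injective)

theorem Matrix.PosSemidef.prod_eigenvalues_diagonal_conj_le {A : Matrix (Fin N) (Fin N) 𝕜}
    (hA : A.PosSemidef) {lam : Fin N → ℝ} {s : Equiv.Perm (Fin N)}
    (hlam : ∀ i, lam i = hA.1.eigenvalues (s i)) (hlam_anti : Antitone lam) {d : Fin N → ℝ}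
    (hd0 : ∀ i, 0 ≤ d i) (hd_anti : Antitone d)
    (hΓ : ((diagonal fun i => (d i : 𝕜))ᴴ * A * diagonal fun i => (d i : 𝕜)).IsHermitian)
    {K : ℕ} (hKN : K ≤ N) {e : Fin K → Fin N} (he : Function.Injective e) :
    ∏ j, hΓ.eigenvalues (e j) ≤ ∏ j, d (Fin.castLE hKN j) ^ 2 * lam (Fin.castLE hKN j) := by
  set D : Matrix (Fin N) (Fin N) 𝕜 := diagonal fun i => (d i : 𝕜)
  obtain ⟨U, hU, hUΓU⟩ := hΓ.exists_conjTranspose_mul_self_eq_one_and_conj_eq_diagonal he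
  have hDD : Dᴴ * D = diagonal fun i => ((d i ^ 2 : ℝ) : 𝕜) := by
    simp [D, diagonal_conjTranspose, diagonal_mul_diagonal, sq]
  have hd2_anti : Antitone fun i => d i ^ 2 := fun a b hab =>
    pow_le_pow_left₀ (hd0 b) (hd_anti hab) 2
  have hd2 : ∀ f : Fin K → Fin N, StrictMono f →
      ∏ j, d (f j) ^ 2 ≤ ∏ j, d (Fin.castLE hKN j) ^ 2 := fun f hf =>
    hd2_anti.prod_comp_le_prod_castLE (fun i => sq_nonneg _) hKN hf.injective
  have hlam0 : 0 ≤ ∏ j, lam (Fin.castLE hKN j) :=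
    prod_nonneg fun j _ => hlam _ ▸ hA.eigenvalues_nonneg _
  rw [← RCLike.ofReal_le_ofReal (K := 𝕜)]
  calc ((∏ j, hΓ.eigenvalues (e j) : ℝ) : 𝕜) = (Uᴴ * (Dᴴ * A * D) * U).det := by
        rw [hUΓU, det_diagonal, RCLike.ofReal_prod]
    _ = ((D * U)ᴴ * A * (D * U)).det := by simp only [conjTranspose_mul, Matrix.mul_assoc]
    _ ≤ (∏ j, lam (Fin.castLE hKN j)) * ((D * U)ᴴ * (D * U)).det :=
        hA.det_conjTranspose_mul_mul_le hlam hlam_anti hKN _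
    _ = (∏ j, lam (Fin.castLE hKN j)) *
          (Uᴴ * diagonal (fun i => ((d i ^ 2 : ℝ) : 𝕜)) * U).det := by
        rw [conjTranspose_mul, Matrix.mul_assoc, ← Matrix.mul_assoc Dᴴ, hDD, Matrix.mul_assoc]
    _ ≤ (∏ j, lam (Fin.castLE hKN j)) * ((∏ j, d (Fin.castLE hKN j) ^ 2) * (Uᴴ * U).det) :=
        mul_le_mul_of_nonneg_left (det_conjTranspose_mul_diagonal_mul_le hd2 U)
          (RCLike.ofReal_nonneg.mpr hlam0)
    _ = _ := by
        rw [hU, det_one, mul_one, prod_mul_distrib]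
        push_cast
        ring

theorem Matrix.IsHermitian.prod_eigenvalues_diagonal_conj {A : Matrix (Fin N) (Fin N) 𝕜}
    (hA : A.IsHermitian) (d : Fin N → ℝ)
    (hΓ : ((diagonal fun i => (d i : 𝕜))ᴴ * A * diagonal fun i => (d i : 𝕜)).IsHermitian) :
    ∏ i, hΓ.eigenvalues i = (∏ i, d i ^ 2) * ∏ i, hA.eigenvalues i := by
  rw [← RCLike.ofReal_inj (K := 𝕜)]
  push_cast
  rw [← hΓ.det_eq_prod_eigenvalues, ← hA.det_eq_prod_eigenvalues, det_mul, det_mul,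
    det_conjTranspose, det_diagonal]
  simp only [star_prod, RCLike.star_def, RCLike.conj_ofReal]
  rw [prod_pow]
  ring

end Hermitian

theorem stmt_6_general {N : ℕ} (A D : Matrix (Fin N) (Fin N) ℂ)
    (hA : A.PosSemidef)
    (d : Fin N → ℝ) (hd0 : ∀ i, 0 ≤ d i) (hd_desc : Antitone d)
    (hD : D = Matrix.diagonal (fun i => (d i : ℂ)))
    (hΓ : (Dᴴ * A * D).PosSemidef)
    (lamA lamΓ : Fin N → ℝ) (sA sΓ : Equiv.Perm (Fin N))
    (hlamA : ∀ i, lamA i = hA.1.eigenvalues (sA i))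
    (hlamΓ : ∀ i, lamΓ i = hΓ.1.eigenvalues (sΓ i))
    (hA_desc : Antitone lamA) :
    (∀ K, 1 ≤ K → K ≤ N - 1 →
      ∏ i ∈ Finset.univ.filter (fun i : Fin N => (i : ℕ) < K), lamΓ i ≤
        ∏ i ∈ Finset.univ.filter (fun i : Fin N => (i : ℕ) < K), d i ^ 2 * lamA i) ∧
      ∏ i : Fin N, lamΓ i = ∏ i : Fin N, d i ^ 2 * lamA i := by
  subst hD
  refine ⟨fun K _ hK => ?_, ?_⟩
  · have hKN : K ≤ N := hK.trans (N.sub_le 1)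
    simp only [Fin.prod_filter_val_lt hKN, hlamΓ]
    exact hA.prod_eigenvalues_diagonal_conj_le hlamA hA_desc hd0 hd_desc hΓ.1 hKN
      (sΓ.injective.comp (Fin.castLE_injective hKN))
  · simp only [hlamΓ, hlamA, prod_mul_distrib, Equiv.prod_comp]
    exact hA.1.prod_eigenvalues_diagonal_conj d hΓ.1

theorem stmt_6 {N : ℕ} (A D : Matrix (Fin N) (Fin N) ℂ)
    (hA : A.PosSemidef)
    (d : Fin N → ℝ) (hd0 : ∀ i, 0 ≤ d i) (hd_desc : Antitone d)
    (hD : D = Matrix.diagonal (fun i => (d i : ℂ)))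
    (hΓ : (Dᴴ * A * D).PosSemidef)
    (lamA lamΓ : Fin N → ℝ) (sA sΓ : Equiv.Perm (Fin N))
    (hlamA : ∀ i, lamA i = hA.1.eigenvalues (sA i))
    (hlamΓ : ∀ i, lamΓ i = hΓ.1.eigenvalues (sΓ i))
    (hA_desc : Antitone lamA) (hΓ_desc : Antitone lamΓ) :
    (∀ K, 1 ≤ K → K ≤ N - 1 →
      ∏ i ∈ Finset.univ.filter (fun i : Fin N => (i : ℕ) < K), lamΓ i ≤
        ∏ i ∈ Finset.univ.filter (fun i : Fin N => (i : ℕ) < K), d i ^ 2 * lamA i) ∧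
      ∏ i : Fin N, lamΓ i = ∏ i : Fin N, d i ^ 2 * lamA i :=
  stmt_6_general A D hA d hd0 hd_desc hD hΓ lamA lamΓ sA sΓ hlamA hlamΓ hA_desc
end

section
/- Let a, b ∈ ℝ_+^N be sorted descending with a ≺_× b and b_1 > a_1, and let l be the smallest index with b_l < a_l. With β defined by the pairwise transformation (β_1 = a_1, β_l = b_1 b_l / a_1 if b_1 b_l ≤ a_1 a_l; otherwise β_1 = b_1 b_l / a_l, β_l = a_l; β_k = b_k for k ≠ 1, l), the vector a is multiplicatively majorized by β: a ≺_× β. -/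
open BigOperators

def MulMaj {N : ℕ} (a b : Fin N → ℝ) : Prop :=
  (∀ K < N, ∏ i ∈ Finset.univ.filter (fun i : Fin N => (i : ℕ) < K), a i ≤
      ∏ i ∈ Finset.univ.filter (fun i : Fin N => (i : ℕ) < K), b i) ∧
    ∏ i : Fin N, a i = ∏ i : Fin N, b i

lemma prod_swap2 {n : ℕ} (s : Finset (Fin n)) (f g : Fin n → ℝ) (i j : Fin n)
    (hij : i ≠ j) (hi : i ∈ s) (hj : j ∈ s)
    (hfg : f i * f j = g i * g j)
    (h : ∀ k ∈ s, k ≠ i → k ≠ j → f k = g k) :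
    s.prod f = s.prod g := by
  have hj' : j ∈ s.erase i := Finset.mem_erase.mpr ⟨hij.symm, hj⟩
  rw [← Finset.mul_prod_erase s f hi, ← Finset.mul_prod_erase _ f hj',
      ← Finset.mul_prod_erase s g hi, ← Finset.mul_prod_erase _ g hj',
      ← mul_assoc, ← mul_assoc, hfg]
  congr 1
  apply Finset.prod_congr rfl
  intro k hk
  simp only [Finset.mem_erase] at hk
  exact h k hk.2.2 hk.2.1 hk.1

theorem stmt_11 {M : ℕ} (a b β : Fin (M + 1) → ℝ)
    (ha0 : ∀ i, 0 < a i) (hb0 : ∀ i, 0 < b i)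
    (ha_desc : Antitone a) (hb_desc : Antitone b)
    (hmaj : MulMaj a b) (h1 : a 0 < b 0)
    (l : Fin (M + 1)) (hl : b l < a l) (hl_min : ∀ j < l, ¬ b j < a j)
    (hβ1 : (b 0 * b l ≤ a 0 * a l → β 0 = a 0 ∧ β l = b 0 * b l / a 0) ∧
      (a 0 * a l < b 0 * b l → β 0 = b 0 * b l / a l ∧ β l = a l))
    (hβk : ∀ k, k ≠ 0 → k ≠ l → β k = b k) :
    MulMaj a β := by
  have hl0 : l ≠ 0 := by
    intro h; rw [h] at hl; exact absurd hl (not_lt.mpr h1.le)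
  have hprod : β 0 * β l = b 0 * b l := by
    rcases le_or_gt (b 0 * b l) (a 0 * a l) with h | h
    · obtain ⟨h0, hL⟩ := hβ1.1 h
      rw [h0, hL]; field_simp [(ha0 0).ne']
    · obtain ⟨h0, hL⟩ := hβ1.2 h
      rw [h0, hL]; field_simp [(ha0 l).ne']
  have hβ0 : a 0 ≤ β 0 := by
    rcases le_or_gt (b 0 * b l) (a 0 * a l) with h | h
    · rw [(hβ1.1 h).1]
    · rw [(hβ1.2 h).1]
      exact ((lt_div_iff₀ (ha0 l)).mpr h).le
  constructor
  · intro K hK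
    rcases le_or_gt K l.val with hKl | hKl
    · apply Finset.prod_le_prod
      · intro i _; exact (ha0 i).le
      · intro i hi
        simp only [Finset.mem_filter] at hi
        have hil : i < l := by
          rw [Fin.lt_def]; exact lt_of_lt_of_le hi.2 hKl
        rcases eq_or_ne i 0 with rfl | hi0
        · exact hβ0
        · rw [hβk i hi0 (ne_of_lt hil)]
          exact not_lt.mp (hl_min i hil)
    · have heq : ∏ i ∈ Finset.univ.filter (fun i : Fin (M+1) => (i:ℕ) < K), β i
          = ∏ i ∈ Finset.univ.filter (fun i : Fin (M+1) => (i:ℕ) < K), b i := by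
        apply prod_swap2 _ _ _ 0 l (Ne.symm hl0)
        · simp only [Finset.mem_filter, Finset.mem_univ, true_and, Fin.val_zero]
          omega
        · simp only [Finset.mem_filter, Finset.mem_univ, true_and]
          exact hKl
        · exact hprod
        · intro k _ hk0 hkl; exact hβk k hk0 hkl
      rw [heq]; exact hmaj.1 K hK
  · have heq : ∏ i, β i = ∏ i, b i := by
      apply prod_swap2 _ _ _ 0 l (Ne.symm hl0) (Finset.mem_univ _) (Finset.mem_univ _) hprod
      intro k _ hk0 hkl; exact hβk k hk0 hkl
    rw [heq]; exact hmaj.2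
end

section
/- Let a, b ∈ ℝ_+^N be sorted descending with a ≺_× b (multiplicative majorization), all entries positive, and suppose l is an index with β_l = a_l for a vector β sorted descending satisfying a ≺_× β and ∏_{k=1}^K β_k ≥ ∏_{k=1}^K a_k for all K. Then the vectors obtained by deleting the l-th coordinate from a and β satisfy a_p ≺_× β_p. -/
open BigOperators

lemma succAbove_val {M : ℕ} (l : Fin (M+1)) (i : Fin M) :
    ((l.succAbove i : Fin (M+1)) : ℕ) = if (i:ℕ) < (l:ℕ) then (i:ℕ) else (i:ℕ)+1 := by
  rcases Nat.lt_or_ge (i:ℕ) (l:ℕ) with h | h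
  · rw [if_pos h, Fin.succAbove_of_castSucc_lt _ _ (by simpa [Fin.lt_def] using h)]
    simp
  · rw [if_neg (Nat.not_lt.2 h), Fin.succAbove_of_le_castSucc _ _ (by simpa [Fin.le_def] using h)]
    simp

lemma key {M : ℕ} (l : Fin (M+1)) (f : Fin (M+1) → ℝ) (K : ℕ) (hK : K ≤ M) :
    f l * ∏ i ∈ Finset.univ.filter (fun i : Fin M => (i : ℕ) < K), f (l.succAbove i)
      = if K ≤ (l:ℕ) then
          f l * ∏ j ∈ Finset.univ.filter (fun j : Fin (M+1) => (j : ℕ) < K), f j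
        else ∏ j ∈ Finset.univ.filter (fun j : Fin (M+1) => (j : ℕ) < K+1), f j := by
  have hinj : ∀ x ∈ Finset.univ.filter (fun i : Fin M => (i : ℕ) < K), ∀ y ∈ Finset.univ.filter (fun i : Fin M => (i : ℕ) < K), l.succAbove x = l.succAbove y → x = y := by
    intro x _ y _ h; exact l.succAbove_right_injective h
  rw [← Finset.prod_image hinj]
  split_ifs with h
  · have hset : (Finset.univ.filter (fun i : Fin M => (i : ℕ) < K)).image l.succAbove
        = Finset.univ.filter (fun j : Fin (M+1) => (j : ℕ) < K) := by
      ext j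
      simp only [Finset.mem_image, Finset.mem_filter, Finset.mem_univ, true_and]
      constructor
      · rintro ⟨i, hi, rfl⟩
        have := succAbove_val l i; split_ifs at this <;> omega
      · intro hj
        have hjl : j ≠ l := by
          intro e; subst e; omega
        obtain ⟨i, rfl⟩ := Fin.exists_succAbove_eq hjl
        have := succAbove_val l i
        exact ⟨i, by split_ifs at this <;> omega, rfl⟩
    rw [hset]
  · have hl : l ∈ Finset.univ.filter (fun j : Fin (M+1) => (j : ℕ) < K+1) := by
      simp; omega
    have hset : (Finset.univ.filter (fun i : Fin M => (i : ℕ) < K)).image l.succAbove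
        = (Finset.univ.filter (fun j : Fin (M+1) => (j : ℕ) < K+1)).erase l := by
      ext j
      simp only [Finset.mem_image, Finset.mem_filter, Finset.mem_univ, true_and,
        Finset.mem_erase]
      constructor
      · rintro ⟨i, hi, rfl⟩
        have := succAbove_val l i
        have := succAbove_val l i
        refine ⟨l.succAbove_ne i, by split_ifs at this <;> omega⟩
      · rintro ⟨hjl, hj⟩
        obtain ⟨i, rfl⟩ := Fin.exists_succAbove_eq hjl
        have := succAbove_val l i
        refine ⟨i, by split_ifs at this <;> omega, rfl⟩
    rw [hset, mul_comm, Finset.prod_erase_mul _ _ hl]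


theorem stmt_16 {M : ℕ} (a β : Fin (M + 1) → ℝ)
    (ha0 : ∀ i, 0 < a i) (hβ0 : ∀ i, 0 < β i)
    (ha_desc : Antitone a) (hβ_desc : Antitone β)
    (hmaj : MulMaj a β)
    (l : Fin (M + 1)) (hl : β l = a l) :
    MulMaj (a ∘ l.succAbove) (β ∘ l.succAbove) := by
  obtain ⟨hpre, htot⟩ := hmaj
  have hal : (0:ℝ) < a l := ha0 l
  constructor
  · intro K hK
    have hka := key l a K (le_of_lt hK)
    have hkb := key l β K (le_of_lt hK)
    simp only [Function.comp]
    by_cases h : K ≤ (l:ℕ)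
    · rw [if_pos h] at hka hkb
      rw [mul_left_cancel₀ hal.ne' hka, mul_left_cancel₀ (hβ0 l).ne' hkb]
      exact hpre K (by omega)
    · rw [if_neg h] at hka hkb
      have hle := hpre (K+1) (by omega)
      rw [← hka, ← hkb, hl] at hle
      exact le_of_mul_le_mul_left hle hal
  · have ha := Fin.prod_univ_succAbove a l
    have hb := Fin.prod_univ_succAbove β l
    rw [ha, hb, hl] at htot
    simp only [Function.comp]
    exact mul_left_cancel₀ hal.ne' htot
end

section
/- Let X, Y be N×N positive semi-definite Hermitian matrices with eigenvalues in descending order. Then det(X + Y) ≥ ∏_{k=1}^N (λ_k(X) + λ_k(Y)). -/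
open Matrix BigOperators ComplexOrder

/-!
Let `μ₁ ≥ ⋯ ≥ μ_N` be the eigenvalues of `X + Y` with orthonormal eigenvectors `v_i`. Since
`μ_i = ⟪v_i, X v_i⟫ + ⟪v_i, Y v_i⟫`, Ky Fan's minimum principle (the sum of the `r` smallest
eigenvalues of `X` is at most `∑ ⟪v_i, X v_i⟫` over any `r` orthonormal vectors) shows that every
tail sum `∑_{i ≥ j} (λ_i(X) + λ_i(Y))` is at most `∑_{i ≥ j} μ_i`; the full sums agree, both being
`tr X + tr Y`. So `μ` is majorized by `λ(X) + λ(Y)`, and the product of nonnegative numbers is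
Schur-concave: by `log c - log m ≤ (c - m) / m` and Abel summation against the increasing weights
`1 / μ_i`, `∑ log (λ_i(X) + λ_i(Y)) ≤ ∑ log μ_i = log det (X + Y)`.
-/

open Finset

section Majorization

variable {ι : Type*} [LinearOrder ι]

lemma sum_mul_le_mul_sum_of_tail_sums_nonpos {t e : ι → ℝ} (ht : Monotone t) (s : Finset ι)
    (he : ∀ j ∈ s, ∑ i ∈ s with j ≤ i, e i ≤ 0) {b : ι} (hb : ∀ i ∈ s, b ≤ i) :
    ∑ i ∈ s, t i * e i ≤ t b * ∑ i ∈ s, e i := by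
  induction s using Finset.induction_on_min generalizing b with
  | empty => simp
  | insert a s has ih =>
    have ha : a ∉ s := fun h => lt_irrefl a (has a h)
    have hes : ∀ j ∈ s, ∑ i ∈ s with j ≤ i, e i ≤ 0 := fun j hj => by
      simpa [filter_insert, not_le.2 (has j hj)] using he j (mem_insert_of_mem hj)
    have hall : ∑ i ∈ insert a s, e i ≤ 0 := by
      simpa [filter_insert, filter_true_of_mem fun i hi => (has i hi).le] using
        he a (mem_insert_self a s)
    calc ∑ i ∈ insert a s, t i * e i = t a * e a + ∑ i ∈ s, t i * e i := sum_insert ha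
      _ ≤ t a * e a + t a * ∑ i ∈ s, e i := by
          gcongr
          exact ih hes fun i hi => (has i hi).le
      _ = t a * ∑ i ∈ insert a s, e i := by rw [sum_insert ha, mul_add]
      _ ≤ t b * ∑ i ∈ insert a s, e i :=
          mul_le_mul_of_nonpos_right (ht (hb a (mem_insert_self a s))) hall

variable [Fintype ι]

theorem prod_le_prod_of_tail_sums_le {m c : ι → ℝ} (hm : Antitone m) (hc : ∀ i, 0 ≤ c i)
    (htail : ∀ j, ∑ i with j ≤ i, c i ≤ ∑ i with j ≤ i, m i)
    (htot : ∑ i, m i = ∑ i, c i) : ∏ i, c i ≤ ∏ i, m i := by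
  cases isEmpty_or_nonempty ι
  · simp
  obtain ⟨top, htop⟩ := Finite.exists_max (id : ι → ι)
  obtain ⟨bot, hbot⟩ := Finite.exists_min (id : ι → ι)
  have hc_top : c top ≤ m top := by
    have hmax : ∀ i, top ≤ i ↔ i = top := fun i => ⟨(htop i).antisymm, fun h => h ▸ le_rfl⟩
    simpa [hmax, filter_eq'] using htail top
  have hm_ge : ∀ i, c top ≤ m i := fun i => hc_top.trans (hm (htop i))
  by_cases hc0 : ∃ i, c i = 0
  · obtain ⟨i, hi⟩ := hc0
    rw [prod_eq_zero (mem_univ i) hi]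
    exact prod_nonneg fun j _ => (hc top).trans (hm_ge j)
  push Not at hc0
  have hcpos : ∀ i, 0 < c i := fun i => (hc i).lt_of_ne' (hc0 i)
  have hmpos : ∀ i, 0 < m i := fun i => (hcpos top).trans_le (hm_ge i)
  have habel : ∑ i, (m i)⁻¹ * (c i - m i) ≤ 0 := by
    have := sum_mul_le_mul_sum_of_tail_sums_nonpos (t := fun i => (m i)⁻¹)
      (e := fun i => c i - m i) (fun i j hij => inv_anti₀ (hmpos j) (hm hij)) univ
      (fun j _ => by simpa [sum_sub_distrib] using htail j) (b := bot) fun i _ => hbot i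
    simpa [sum_sub_distrib, htot] using this
  have hlog : ∀ i, Real.log (c i) - Real.log (m i) ≤ (m i)⁻¹ * (c i - m i) := fun i =>
    calc Real.log (c i) - Real.log (m i) = Real.log (c i / m i) :=
          (Real.log_div (hcpos i).ne' (hmpos i).ne').symm
      _ ≤ c i / m i - 1 := Real.log_le_sub_one_of_pos (div_pos (hcpos i) (hmpos i))
      _ = (m i)⁻¹ * (c i - m i) := by rw [inv_mul_eq_div, sub_div, div_self (hmpos i).ne']
  have hsum_log : ∑ i, Real.log (c i) - ∑ i, Real.log (m i) ≤ 0 := by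
    rw [← sum_sub_distrib]
    exact (sum_le_sum fun i _ => hlog i).trans habel
  rw [← Real.log_le_log_iff (prod_pos fun i _ => hcpos i) (prod_pos fun i _ => hmpos i),
    Real.log_prod fun i _ => (hcpos i).ne', Real.log_prod fun i _ => (hmpos i).ne']
  linarith

end Majorization

theorem sum_le_sum_mul_of_sum_eq_card {ι : Type*} [Fintype ι] {a c : ι → ℝ} {J : Finset ι}
    {θ : ℝ} (hJ : ∀ i ∈ J, a i ≤ θ) (hJc : ∀ i ∉ J, θ ≤ a i) (hc0 : ∀ i, 0 ≤ c i)
    (hc1 : ∀ i, c i ≤ 1) (hc : ∑ i, c i = #J) :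
    ∑ i ∈ J, a i ≤ ∑ i, c i * a i := by
  classical
  have key : 0 ≤ ∑ i, (c i - if i ∈ J then 1 else 0) * (a i - θ) := by
    refine sum_nonneg fun i _ => ?_
    split_ifs with h
    · exact mul_nonneg_of_nonpos_of_nonpos (by linarith [hc1 i]) (by linarith [hJ i h])
    · exact mul_nonneg (by linarith [hc0 i]) (by linarith [hJc i h])
  have expand : ∑ i, (c i - if i ∈ J then 1 else 0) * (a i - θ)
      = ∑ i, c i * a i - ∑ i ∈ J, a i - θ * (∑ i, c i - #J) := by
    simp only [sub_mul, mul_sub, sum_sub_distrib, ite_mul, one_mul, zero_mul, sum_ite_mem,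
      univ_inter, ← sum_mul, sum_const, nsmul_eq_mul]
    ring
  rw [hc, sub_self, mul_zero, sub_zero] at expand
  linarith

section Eigenbasis

open RCLike
open scoped InnerProductSpace

variable {𝕜 E ι : Type*} [RCLike 𝕜] [NormedAddCommGroup E] [InnerProductSpace 𝕜 E] [Fintype ι]
  {A : E →ₗ[𝕜] E} {b : OrthonormalBasis ι 𝕜 E} {lam : ι → ℝ}

lemma re_inner_apply_basis (hb : ∀ j, A (b j) = (lam j : 𝕜) • b j) (i : ι) :
    re ⟪b i, A (b i)⟫_𝕜 = lam i := by
  rw [hb, inner_smul_right, inner_self_eq_norm_sq_to_K, b.orthonormal.1 i]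
  simp

lemma re_inner_apply_eq_sum (hb : ∀ j, A (b j) = (lam j : 𝕜) • b j) (u : E) :
    re ⟪u, A u⟫_𝕜 = ∑ j, lam j * ‖⟪b j, u⟫_𝕜‖ ^ 2 := by
  have hAu : A u = ∑ j, (⟪b j, u⟫_𝕜 * lam j) • b j := by
    conv_lhs => rw [← b.sum_repr' u]
    simp only [map_sum, map_smul, hb, smul_smul]
  rw [hAu, inner_sum, map_sum]
  refine sum_congr rfl fun j _ => ?_
  rw [inner_smul_right, ← inner_conj_symm u (b j), mul_right_comm, mul_conj, ← ofReal_pow,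
    ← ofReal_mul, ofReal_re, mul_comm]

lemma sum_eq_re_trace (hb : ∀ j, A (b j) = (lam j : 𝕜) • b j) :
    ∑ j, lam j = re (LinearMap.trace 𝕜 E A) := by
  simp [LinearMap.trace_eq_sum_inner A b, re_inner_apply_basis hb]

theorem sum_le_sum_re_inner_of_orthonormal (hb : ∀ j, A (b j) = (lam j : 𝕜) • b j)
    {κ : Type*} {v : κ → E} (hv : Orthonormal 𝕜 v) (S : Finset κ) {J : Finset ι}
    (hJS : #J = #S) {θ : ℝ} (hJ : ∀ j ∈ J, lam j ≤ θ) (hJc : ∀ j ∉ J, θ ≤ lam j) :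
    ∑ j ∈ J, lam j ≤ ∑ i ∈ S, re ⟪v i, A (v i)⟫_𝕜 := by
  set C : ι → ℝ := fun j => ∑ i ∈ S, ‖⟪b j, v i⟫_𝕜‖ ^ 2
  have hsum : ∑ i ∈ S, re ⟪v i, A (v i)⟫_𝕜 = ∑ j, C j * lam j := by
    simp only [re_inner_apply_eq_sum hb, C, sum_mul]
    rw [sum_comm]
    simp only [mul_comm]
  rw [hsum]
  refine sum_le_sum_mul_of_sum_eq_card hJ hJc (fun j => sum_nonneg fun i _ => by positivity)
    (fun j => ?bessel) ?parseval
  case bessel =>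
    calc C j = ∑ i ∈ S, ‖⟪v i, b j⟫_𝕜‖ ^ 2 := by simp only [C, norm_inner_symm]
      _ ≤ ‖b j‖ ^ 2 := hv.sum_inner_products_le _
      _ = 1 := by simp [b.orthonormal.1 j]
  case parseval =>
    simp only [C]
    rw [sum_comm]
    simp [b.sum_sq_norm_inner_right, hv.1, hJS]

theorem sum_tail_le_sum_tail_re_inner [LinearOrder ι] (hb : ∀ j, A (b j) = (lam j : 𝕜) • b j)
    (hlam : Antitone lam) {v : ι → E} (hv : Orthonormal 𝕜 v) (j : ι) :
    ∑ i with j ≤ i, lam i ≤ ∑ i with j ≤ i, re ⟪v i, A (v i)⟫_𝕜 :=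
  sum_le_sum_re_inner_of_orthonormal hb hv _ rfl (θ := lam j)
    (fun _ hi => hlam (mem_filter.1 hi).2) (fun _ hi => hlam (le_of_not_ge (by simpa using hi)))

end Eigenbasis

lemma Matrix.IsHermitian.toEuclideanLin_eigenvectorBasis_reindex {𝕜 n : Type*} [RCLike 𝕜]
    [Fintype n] [DecidableEq n] {A : Matrix n n 𝕜} (hA : A.IsHermitian) {lam : n → ℝ}
    {s : Equiv.Perm n} (hlam : ∀ i, lam i = hA.eigenvalues (s i)) (i : n) :
    A.toEuclideanLin (hA.eigenvectorBasis.reindex s.symm i)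
      = (lam i : 𝕜) • hA.eigenvectorBasis.reindex s.symm i := by
  rw [OrthonormalBasis.reindex_apply, Equiv.symm_symm, hlam, ← RCLike.real_smul_eq_coe_smul]
  exact congrArg (WithLp.toLp 2) (hA.mulVec_eigenvectorBasis (s i))

lemma exists_perm_antitone_comp {α : Type*} [LinearOrder α] {n : ℕ} (f : Fin n → α) :
    ∃ σ : Equiv.Perm (Fin n), Antitone (f ∘ σ) :=
  ⟨Tuple.sort (OrderDual.toDual ∘ f), Tuple.monotone_sort (OrderDual.toDual ∘ f)⟩

theorem stmt_17 {N : ℕ} (X Y : Matrix (Fin N) (Fin N) ℂ)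
    (hX : X.PosSemidef) (hY : Y.PosSemidef)
    (lamX lamY : Fin N → ℝ) (sX sY : Equiv.Perm (Fin N))
    (hlamX : ∀ i, lamX i = hX.1.eigenvalues (sX i))
    (hlamY : ∀ i, lamY i = hY.1.eigenvalues (sY i))
    (hX_desc : Antitone lamX) (hY_desc : Antitone lamY) :
    ((∏ k : Fin N, (lamX k + lamY k) : ℝ) : ℂ) ≤ (X + Y).det := by
  have hM := (hX.add hY).isHermitian
  obtain ⟨σ, hσ⟩ := exists_perm_antitone_comp hM.eigenvalues
  have hbX := hX.1.toEuclideanLin_eigenvectorBasis_reindex hlamX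
  have hbY := hY.1.toEuclideanLin_eigenvectorBasis_reindex hlamY
  have hbM := hM.toEuclideanLin_eigenvectorBasis_reindex (s := σ) fun _ => rfl
  have hv := (hM.eigenvectorBasis.reindex σ.symm).orthonormal
  have hlin : (X + Y).toEuclideanLin = X.toEuclideanLin + Y.toEuclideanLin := map_add _ _ _
  have htail : ∀ j, ∑ i with j ≤ i, (lamX i + lamY i) ≤ ∑ i with j ≤ i, hM.eigenvalues (σ i) := by
    intro j
    rw [sum_add_distrib]
    refine (add_le_add (sum_tail_le_sum_tail_re_inner hbX hX_desc hv j)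
      (sum_tail_le_sum_tail_re_inner hbY hY_desc hv j)).trans_eq ?_
    rw [← sum_add_distrib]
    refine sum_congr rfl fun i _ => ?_
    rw [← re_inner_apply_basis hbM, hlin, LinearMap.add_apply, inner_add_right, map_add]
  have htot : ∑ i, hM.eigenvalues (σ i) = ∑ i, (lamX i + lamY i) := by
    rw [sum_add_distrib, sum_eq_re_trace hbM, sum_eq_re_trace hbX, sum_eq_re_trace hbY, hlin,
      map_add, map_add]
  have hdet : (X + Y).det = ((∏ i, hM.eigenvalues (σ i) : ℝ) : ℂ) := by
    rw [hM.det_eq_prod_eigenvalues, Equiv.prod_comp σ hM.eigenvalues]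
    push_cast
    rfl
  have hsum_nonneg : ∀ i, 0 ≤ lamX i + lamY i := fun i => by
    rw [hlamX, hlamY]
    exact add_nonneg (hX.eigenvalues_nonneg _) (hY.eigenvalues_nonneg _)
  rw [hdet, Complex.real_le_real]
  exact prod_le_prod_of_tail_sums_le hσ hsum_nonneg htail htot
end
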